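/- arXiv:1809.06627 — 2 statements merged into one kernel-verified Lean document; each statement's English description precedes it below -/
import Mathlib

section
/- Let a, b, e, f, p ∈ ℚ with √p irrational, e + f√p > 0, a + b√p > 0, and suppose either (a) a - b√p > 0 and |f|/e > |b|/a, or (b) a - b√p < 0 and |e|/f > |a|/b. Set A = f, B = -e, C = 2fa²/b² - pf. Then for every rectangle (α + β√p) × (γ + δ√p) with α, β, γ, δ ∈ ℚ, (α + β√p) > 0, and ratio of sides (γ + δ√p)/(α + β√p) = a + b√p, the ABC-area is nonzero, and its sign is the same for all such rectangles (it equals the sign of fa - eb). -/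
/-!
The ratio condition and the irrationality of `√p` force `γ = aα + pbβ` and `δ = aβ + bα`.
Substituting, the ABC-area `S` becomes a rational binary quadratic form in `(α, β)`, and
completing the square gives
`4 b² (fa - eb) S = (2 (fa - eb)(bα + aβ))² + 4 ((fa)² - (eb)²)(a² - pb²) β²`.
Each of the conditions (a), (b) makes `((fa)² - (eb)²)(a² - pb²)` positive, so the right-hand side
is positive whenever `(α, β) ≠ 0`, and `S` has the sign of `fa - eb`.
-/

open Real

def abcArea {R : Type*} [CommRing R] (A B C α β γ δ : R) : R :=
  α * γ * A + α * δ * B + β * γ * B + β * δ * C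

theorem Irrational.ratCast_add_ratCast_mul_inj {r : ℝ} (hr : Irrational r) {x y x' y' : ℚ}
    (h : (x : ℝ) + y * r = x' + y' * r) : x = x' ∧ y = y' := by
  have hy : y = y' := by
    by_contra hy
    have hzero : (((x - x' : ℚ) : ℝ) + ((y - y' : ℚ) : ℝ) * r) = 0 := by
      push_cast
      linarith
    exact ((hr.ratCast_mul (sub_ne_zero.2 hy)).ratCast_add (x - x')).ne_zero hzero
  subst hy
  exact ⟨by exact_mod_cast add_right_cancel h, rfl⟩

theorem coeffs_eq_of_div_eq {p a b α β γ δ : ℚ} (hirr : Irrational √p)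
    (hαβ : (α : ℝ) + β * √p ≠ 0)
    (h : ((γ : ℝ) + δ * √p) / (α + β * √p) = a + b * √p) :
    γ = a * α + p * b * β ∧ δ = a * β + b * α := by
  have hsq : √(p : ℝ) * √p = p :=
    mul_self_sqrt (Rat.cast_nonneg.2 (irrational_sqrt_ratCast_iff.1 hirr).2)
  rw [div_eq_iff hαβ] at h
  apply hirr.ratCast_add_ratCast_mul_inj
  push_cast
  linear_combination h + (b : ℝ) * β * hsq

theorem four_mul_sq_mul_abcArea {K : Type*} [Field K] (a b e f p α β : K) (hb : b ≠ 0) :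
    4 * b ^ 2 * (f * a - e * b) *
        abcArea f (-e) (2 * f * a ^ 2 / b ^ 2 - p * f) α β (a * α + p * b * β) (a * β + b * α) =
      (2 * (f * a - e * b) * (b * α + a * β)) ^ 2 +
        4 * (((f * a) ^ 2 - (e * b) ^ 2) * (a ^ 2 - p * b ^ 2)) * β ^ 2 := by
  unfold abcArea
  field_simp
  ring

section OrderedField

variable {K : Type*} [Field K] [LinearOrder K] [IsStrictOrderedRing K]

theorem sq_mul_lt_sq_mul_of_abs_div_lt {x y u v : K} (hu : 0 < u) (h : |x| / u < |y| / v) :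
    (v * x) ^ 2 < (y * u) ^ 2 := by
  have hv : 0 < v := by
    by_contra! hv
    linarith [div_nonpos_of_nonneg_of_nonpos (abs_nonneg y) hv, div_nonneg (abs_nonneg x) hu.le]
  rw [div_lt_div_iff₀ hu hv] at h
  rw [sq_lt_sq, abs_mul, abs_mul, abs_of_pos hu, abs_of_pos hv]
  linarith

theorem sq_add_mul_sq_pos {x y c : K} (hc : 0 < c) (h : x ≠ 0 ∨ y ≠ 0) :
    0 < x ^ 2 + c * y ^ 2 := by
  rcases h with hx | hy <;> positivity

theorem abcArea_ne_zero_and_pos_iff {a b e f p α β γ δ : K} (hb : b ≠ 0)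
    (hD : 0 < ((f * a) ^ 2 - (e * b) ^ 2) * (a ^ 2 - p * b ^ 2)) (hαβ : α ≠ 0 ∨ β ≠ 0)
    (hγ : γ = a * α + p * b * β) (hδ : δ = a * β + b * α) :
    abcArea f (-e) (2 * f * a ^ 2 / b ^ 2 - p * f) α β γ δ ≠ 0 ∧
      (0 < abcArea f (-e) (2 * f * a ^ 2 / b ^ 2 - p * f) α β γ δ ↔ 0 < f * a - e * b) := by
  subst hγ hδ
  have hfe : f * a - e * b ≠ 0 := fun h0 ↦ by
    rw [show (f * a) ^ 2 - (e * b) ^ 2 = (f * a - e * b) * (f * a + e * b) by ring, h0] at hD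
    simp at hD
  have hprod : 0 < 4 * b ^ 2 * (f * a - e * b) *
      abcArea f (-e) (2 * f * a ^ 2 / b ^ 2 - p * f) α β (a * α + p * b * β) (a * β + b * α) := by
    rw [four_mul_sq_mul_abcArea a b e f p α β hb]
    refine sq_add_mul_sq_pos (by positivity) ?_
    rcases eq_or_ne β 0 with rfl | hβ
    · exact .inl (by simpa [hfe, hb] using hαβ)
    · exact .inr hβ
  rw [mul_comm (4 * b ^ 2), mul_assoc] at hprod
  refine ⟨right_ne_zero_of_mul (right_ne_zero_of_mul hprod.ne'), ?_⟩
  rw [pos_iff_pos_of_mul_pos hprod, mul_pos_iff_of_pos_left (by positivity)]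

end OrderedField

theorem sq_sub_mul_sq_eq_mul_sqrt (a b : ℝ) {p : ℝ} (hp : 0 ≤ p) :
    a ^ 2 - p * b ^ 2 = (a + b * √p) * (a - b * √p) := by
  linear_combination (b ^ 2) * mul_self_sqrt hp

theorem abc_discriminant_pos {a b e f p : ℚ} (hp : 0 ≤ p)
    (hab : (a : ℝ) + b * √p > 0)
    (hcase :
      ((a : ℝ) - b * √p > 0 ∧ |f| / e > |b| / a) ∨
      ((a : ℝ) - b * √p < 0 ∧ |e| / f > |a| / b)) :
    0 < ((f * a) ^ 2 - (e * b) ^ 2) * (a ^ 2 - p * b ^ 2) := by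
  have hnorm := sq_sub_mul_sq_eq_mul_sqrt a b (Rat.cast_nonneg.2 hp)
  rcases hcase with ⟨hba, hcond⟩ | ⟨hba, hcond⟩
  · have ha : 0 < a := by exact_mod_cast (by linarith : (0 : ℝ) < a)
    have hnorm_pos : 0 < a ^ 2 - p * b ^ 2 := by
      exact_mod_cast hnorm ▸ mul_pos hab hba
    nlinarith [sq_mul_lt_sq_mul_of_abs_div_lt ha hcond]
  · have hb : 0 < b := by
      have : (0 : ℝ) < b * √p := by linarith
      exact_mod_cast pos_of_mul_pos_left this (sqrt_nonneg _)
    have hnorm_neg : a ^ 2 - p * b ^ 2 < 0 := by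
      exact_mod_cast hnorm ▸ mul_neg_of_pos_of_neg hab hba
    nlinarith [sq_mul_lt_sq_mul_of_abs_div_lt hb hcond]

theorem abc_area_sign_constant_general
    (a b e f p : ℚ) (hirr : Irrational (Real.sqrt p)) (hb : b ≠ 0)
    (hab : (a : ℝ) + (b : ℝ) * Real.sqrt p > 0)
    (hcase :
      ((a : ℝ) - (b : ℝ) * Real.sqrt p > 0 ∧ |f| / e > |b| / a) ∨
      ((a : ℝ) - (b : ℝ) * Real.sqrt p < 0 ∧ |e| / f > |a| / b))
    (A B C : ℝ) (hA : A = (f : ℝ)) (hB : B = -(e : ℝ))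
    (hC : C = 2 * (f : ℝ) * (a : ℝ) ^ 2 / (b : ℝ) ^ 2 - (p : ℝ) * (f : ℝ)) :
    ∀ α β γ δ : ℚ, (α : ℝ) + (β : ℝ) * Real.sqrt p > 0 →
      ((γ : ℝ) + (δ : ℝ) * Real.sqrt p) / ((α : ℝ) + (β : ℝ) * Real.sqrt p)
        = (a : ℝ) + (b : ℝ) * Real.sqrt p →
      ((α : ℝ) * γ * A + (α : ℝ) * δ * B + (β : ℝ) * γ * B + (β : ℝ) * δ * C ≠ 0 ∧
       (0 < (α : ℝ) * γ * A + (α : ℝ) * δ * B + (β : ℝ) * γ * B + (β : ℝ) * δ * C ↔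
        0 < f * a - e * b)) := by
  intro α β γ δ hside hratio
  obtain ⟨hγ, hδ⟩ := coeffs_eq_of_div_eq hirr hside.ne' hratio
  have hαβ : α ≠ 0 ∨ β ≠ 0 := by
    by_contra! h
    simp [h.1, h.2] at hside
  have hD := abc_discriminant_pos (irrational_sqrt_ratCast_iff.1 hirr).2 hab hcase
  have hS : (α : ℝ) * γ * A + α * δ * B + β * γ * B + β * δ * C
      = ((abcArea f (-e) (2 * f * a ^ 2 / b ^ 2 - p * f) α β γ δ : ℚ) : ℝ) := by
    subst hA hB hC
    simp only [abcArea]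
    push_cast
    ring
  rw [hS, Rat.cast_ne_zero, Rat.cast_pos]
  exact abcArea_ne_zero_and_pos_iff hb hD hαβ hγ hδ

/-- Main lemma, part 2: under condition (a) or (b), for every rectangle
(α + β√p) × (γ + δ√p) with positive first side and side ratio a + b√p, the ABC-area
(with A = f, B = -e, C = 2fa²/b² - pf) is nonzero and its sign equals the sign of fa - eb. -/
theorem abc_area_sign_constant
    (a b e f p : ℚ) (hp : 0 < p) (hirr : Irrational (Real.sqrt p)) (hb : b ≠ 0)
    (hef : (e : ℝ) + (f : ℝ) * Real.sqrt p > 0)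
    (hab : (a : ℝ) + (b : ℝ) * Real.sqrt p > 0)
    (hcase :
      ((a : ℝ) - (b : ℝ) * Real.sqrt p > 0 ∧ |f| / e > |b| / a) ∨
      ((a : ℝ) - (b : ℝ) * Real.sqrt p < 0 ∧ |e| / f > |a| / b))
    (A B C : ℝ) (hA : A = (f : ℝ)) (hB : B = -(e : ℝ))
    (hC : C = 2 * (f : ℝ) * (a : ℝ) ^ 2 / (b : ℝ) ^ 2 - (p : ℝ) * (f : ℝ)) :
    ∀ α β γ δ : ℚ, (α : ℝ) + (β : ℝ) * Real.sqrt p > 0 →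
      ((γ : ℝ) + (δ : ℝ) * Real.sqrt p) / ((α : ℝ) + (β : ℝ) * Real.sqrt p)
        = (a : ℝ) + (b : ℝ) * Real.sqrt p →
      ((α : ℝ) * γ * A + (α : ℝ) * δ * B + (β : ℝ) * γ * B + (β : ℝ) * δ * C ≠ 0 ∧
       (0 < (α : ℝ) * γ * A + (α : ℝ) * δ * B + (β : ℝ) * γ * B + (β : ℝ) * δ * C ↔
        0 < f * a - e * b)) :=
  abc_area_sign_constant_general a b e f p hirr hb hab hcase A B C hA hB hC
end

section
/- Let a, b, e, f ∈ ℚ with fa - eb ≠ 0 and suppose the discriminant condition (a² - pb²)(e² - f²a²/b²) < 0 holds (where b ≠ 0, p ∈ ℚ, p > 0). Then the quadratic Q(t) = (fa - eb)t² + 2(fa²/b - ea)t + (2fa³/b² - pfa - peb) has no real roots; in particular Q(t) has constant sign equal to the sign of fa - eb for all real t. -/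
/-! Completing the square, `l (l t² + 2 m t + c) = (l t + m)² + (l c - m²)`, so the quadratic
has no real root and takes the sign of `l` as soon as its reduced discriminant `m² - l c` is
negative. For the coefficients at hand that discriminant factors as
`(a² - p b²)(e² - f² a² / b²)`. -/

theorem mul_quadratic_pos {R : Type*} [CommRing R] [LinearOrder R] [IsStrictOrderedRing R]
    {l m c : R} (h : m ^ 2 < l * c) (t : R) : 0 < l * (l * t ^ 2 + 2 * m * t + c) := by
  have hsq : l * (l * t ^ 2 + 2 * m * t + c) = (l * t + m) ^ 2 + (l * c - m ^ 2) := by ring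
  rw [hsq]
  exact add_pos_of_nonneg_of_pos (sq_nonneg _) (sub_pos.2 h)

theorem reduced_discrim_eq_mul {K : Type*} [Field K] {a b e f p : K} (hb : b ≠ 0) :
    (f * a ^ 2 / b - e * a) ^ 2
        - (f * a - e * b) * (2 * f * a ^ 3 / b ^ 2 - p * f * a - p * e * b)
      = (a ^ 2 - p * b ^ 2) * (e ^ 2 - f ^ 2 * a ^ 2 / b ^ 2) := by
  field_simp
  ring

theorem quadratic_no_real_roots_general
    (a b e f p : ℚ) (hb : b ≠ 0)
    (hdisc : (a ^ 2 - p * b ^ 2) * (e ^ 2 - f ^ 2 * a ^ 2 / b ^ 2) < 0) :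
    ∀ t : ℝ,
      ((f * a - e * b : ℚ) : ℝ) * t ^ 2
        + 2 * ((f * a ^ 2 / b - e * a : ℚ) : ℝ) * t
        + ((2 * f * a ^ 3 / b ^ 2 - p * f * a - p * e * b : ℚ) : ℝ) ≠ 0 ∧
      (0 < ((f * a - e * b : ℚ) : ℝ) * t ^ 2
        + 2 * ((f * a ^ 2 / b - e * a : ℚ) : ℝ) * t
        + ((2 * f * a ^ 3 / b ^ 2 - p * f * a - p * e * b : ℚ) : ℝ) ↔
       0 < f * a - e * b) := by
  intro t
  have hlt : (f * a ^ 2 / b - e * a) ^ 2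
      < (f * a - e * b) * (2 * f * a ^ 3 / b ^ 2 - p * f * a - p * e * b) :=
    sub_neg.1 ((reduced_discrim_eq_mul hb).symm ▸ hdisc)
  set l := f * a - e * b
  set m := f * a ^ 2 / b - e * a
  set c := 2 * f * a ^ 3 / b ^ 2 - p * f * a - p * e * b
  have hpos := mul_quadratic_pos (l := (l : ℝ)) (m := m) (c := c) (by exact_mod_cast hlt) t
  exact ⟨right_ne_zero_of_mul hpos.ne', (pos_iff_pos_of_mul_pos hpos).symm.trans Rat.cast_pos⟩

/-- If fa - eb ≠ 0 and (a² - pb²)(e² - f²a²/b²) < 0, then the quadratic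
Q(t) = (fa - eb)t² + 2(fa²/b - ea)t + (2fa³/b² - pfa - peb) has no real roots,
and has constant sign equal to the sign of fa - eb. -/
theorem quadratic_no_real_roots
    (a b e f p : ℚ) (hp : 0 < p) (hb : b ≠ 0)
    (hlead : f * a - e * b ≠ 0)
    (hdisc : (a ^ 2 - p * b ^ 2) * (e ^ 2 - f ^ 2 * a ^ 2 / b ^ 2) < 0) :
    ∀ t : ℝ,
      ((f * a - e * b : ℚ) : ℝ) * t ^ 2
        + 2 * ((f * a ^ 2 / b - e * a : ℚ) : ℝ) * t
        + ((2 * f * a ^ 3 / b ^ 2 - p * f * a - p * e * b : ℚ) : ℝ) ≠ 0 ∧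
      (0 < ((f * a - e * b : ℚ) : ℝ) * t ^ 2
        + 2 * ((f * a ^ 2 / b - e * a : ℚ) : ℝ) * t
        + ((2 * f * a ^ 3 / b ^ 2 - p * f * a - p * e * b : ℚ) : ℝ) ↔
       0 < f * a - e * b) :=
  quadratic_no_real_roots_general a b e f p hb hdisc
end
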